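/- (Exact FSP schedulability test) For any preemptive FSP scheduler A and any asynchronous constrained-deadline multi-thread system τ with r subprograms on m unit-capacity processors, [0, S*_r + P) is a feasibility interval: if no thread deadline is missed by A during [0, S*_r + P) (using worst-case execution times), then no deadline is ever missed, where S*_r is given by the recurrence S*_1 = O_1, S*_j = max{O_j, O_j + ⌈(S*_{j-1} − O_j)/T_j⌉·T_j} and P = lcm of the periods. -/

import Mathlib

namespace FSPTest

/-- `S*_1 = O_1`, `S*_{j+1} = max (O_{j+1}) (O_{j+1} + ⌈(S*_j - O_{j+1})/T_{j+1}⌉·T_{j+1})`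
(0-based; `ℕ` truncated subtraction realises the `max`). -/
def Sstar (O T : ℕ → ℕ) : ℕ → ℕ
  | 0 => O 0
  | j + 1 => O (j + 1) + (Sstar O T j - O (j + 1) + T (j + 1) - 1) / T (j + 1) * T (j + 1)

/-- A thread: (subprogram index among `q^1 > ⋯ > q^r`, instance number). -/
abbrev Thread := ℕ × ℕ

def arrival (O T : ℕ → ℕ) (j : Thread) : ℕ := O j.1 + j.2 * T j.1

def work (σ : ℕ → Finset Thread) (j : Thread) (t : ℕ) : ℕ :=
  ((Finset.range t).filter (fun s => j ∈ σ s)).card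

/-- Thread `j` is active at `t`, where `exec j` is the (actual) execution time
of thread `j`. -/
def active (r : ℕ) (O T : ℕ → ℕ) (exec : Thread → ℕ)
    (σ : ℕ → Finset Thread) (j : Thread) (t : ℕ) : Prop :=
  j.1 < r ∧ arrival O T j ≤ t ∧ work σ j t < exec j

def hp (j' j : Thread) : Prop :=
  j'.1 < j.1 ∨ (j'.1 = j.1 ∧ j'.2 < j.2)

/-- Preemptive FSP schedule on `m` unit-capacity processors, for actual
execution times `exec`. -/
def isFSPSchedule (r m : ℕ) (O T : ℕ → ℕ) (exec : Thread → ℕ)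
    (σ : ℕ → Finset Thread) : Prop :=
  ∀ t : ℕ,
    (σ t).card ≤ m ∧
    (∀ j ∈ σ t, active r O T exec σ j t) ∧
    (∀ j : Thread, active r O T exec σ j t → j ∉ σ t →
      (σ t).card = m ∧ ∀ j' ∈ σ t, hp j' j)

/-!
With worst-case execution times, subprogram `ℓ` of the FSP schedule repeats with period `P`
from `S*_ℓ` on. By induction on time: a thread released at or after `S*_ℓ` has received the
same amount of service as its copy one period later, and it competes with the same set of
active higher-priority threads, shifted by `P`. The threads that could break this symmetry
(released before `S*_ℓ`, or their copies released before `O_ℓ + P`) have deadlines `D ≤ T`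
inside the checked window `[0, S*_r + P)`, so they are finished. Every deadline is therefore a
deadline of the window shifted by a multiple of `P`. Predictability transfers this to actual
execution times: the remaining work of a thread under `c ≤ C` never exceeds its remaining
work under `C`, because a thread running under `C` but waiting under `c` would have to be
preempted by `m` higher-priority threads that are all running under `C` as well.
-/

section Work

variable (σ : ℕ → Finset Thread) (j : Thread)

lemma work_eq_sum (t : ℕ) : work σ j t = ∑ u ∈ Finset.range t, if j ∈ σ u then 1 else 0 :=
  Finset.card_filter _ _

lemma work_zero : work σ j 0 = 0 := rfl

lemma work_succ (t : ℕ) : work σ j (t + 1) = work σ j t + if j ∈ σ t then 1 else 0 := by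
  simp only [work_eq_sum, Finset.sum_range_succ]

lemma work_add (P t : ℕ) : work σ j (P + t) = work σ j P + work (fun u => σ (P + u)) j t := by
  simp only [work_eq_sum, Finset.sum_range_add]

lemma work_mono {t t' : ℕ} (h : t ≤ t') : work σ j t ≤ work σ j t' :=
  Finset.card_le_card (Finset.filter_subset_filter _ (Finset.range_subset_range.2 h))

variable {σ j}

lemma work_congr {σ' : ℕ → Finset Thread} {j' : Thread} {t : ℕ}
    (h : ∀ u < t, j ∈ σ u ↔ j' ∈ σ' u) : work σ j t = work σ' j' t := by
  simp only [work_eq_sum]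
  exact Finset.sum_congr rfl fun u hu => by simp only [h u (Finset.mem_range.1 hu)]

lemma not_active_of_le_work {r : ℕ} {O T : ℕ → ℕ} {exec : Thread → ℕ} {t t' : ℕ}
    (hdone : exec j ≤ work σ j t) (ht : t ≤ t') : ¬ active r O T exec σ j t' :=
  fun hact => absurd (hdone.trans (work_mono σ j ht)) (not_le.2 hact.2.2)

end Work

lemma hp_iff_toLex_lt {j' j : Thread} : hp j' j ↔ toLex j' < toLex j :=
  Prod.Lex.toLex_lt_toLex.symm

lemma hp_asymm {j' j : Thread} (h : hp j' j) : ¬ hp j j' := by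
  rw [hp_iff_toLex_lt] at h ⊢
  exact lt_asymm h

lemma hp_irrefl (j : Thread) : ¬ hp j j := fun h => hp_asymm h h

lemma hp_fst_le {j' j : Thread} (h : hp j' j) : j'.1 ≤ j.1 := by
  rcases h with h | ⟨h, -⟩ <;> omega

section Schedule

variable {r m : ℕ} {O T : ℕ → ℕ} {exec : Thread → ℕ} {σ : ℕ → Finset Thread}
  {j j' : Thread} {t : ℕ}

namespace isFSPSchedule

lemma card_le (hσ : isFSPSchedule r m O T exec σ) (t : ℕ) : (σ t).card ≤ m :=
  (hσ t).1

lemma active_of_mem (hσ : isFSPSchedule r m O T exec σ) (h : j ∈ σ t) :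
    active r O T exec σ j t :=
  (hσ t).2.1 j h

lemma full_of_not_mem (hσ : isFSPSchedule r m O T exec σ) (hact : active r O T exec σ j t)
    (h : j ∉ σ t) : (σ t).card = m ∧ ∀ j' ∈ σ t, hp j' j :=
  (hσ t).2.2 j hact h

lemma arrival_le_of_mem (hσ : isFSPSchedule r m O T exec σ) (h : j ∈ σ t) :
    arrival O T j ≤ t :=
  (hσ.active_of_mem h).2.1

lemma mem_of_hp_of_mem (hσ : isFSPSchedule r m O T exec σ) (hj : j ∈ σ t)
    (hact : active r O T exec σ j' t) (hhp : hp j' j) : j' ∈ σ t := by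
  by_contra h
  exact hp_asymm hhp ((hσ.full_of_not_mem hact h).2 j hj)

lemma work_le (hσ : isFSPSchedule r m O T exec σ) (j : Thread) :
    ∀ t, work σ j t ≤ exec j
  | 0 => Nat.zero_le _
  | t + 1 => by
    rw [work_succ]
    split_ifs with h
    · exact (hσ.active_of_mem h).2.2
    · exact hσ.work_le j t

lemma work_eq_zero (hσ : isFSPSchedule r m O T exec σ) (ht : t ≤ arrival O T j) :
    work σ j t = 0 :=
  Finset.card_eq_zero.2 <| Finset.filter_eq_empty_iff.2 fun u hu hj => by
    have := hσ.arrival_le_of_mem hj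
    rw [Finset.mem_range] at hu
    omega

end isFSPSchedule

open Classical in
/-- The instance bound `t + 1` is a genuine bound only when all periods are positive
(see `mem_hpActive`). -/
noncomputable def hpActive (r : ℕ) (O T : ℕ → ℕ) (exec : Thread → ℕ)
    (σ : ℕ → Finset Thread) (j : Thread) (t : ℕ) : Finset Thread :=
  (Finset.range r ×ˢ Finset.range (t + 1)).filter
    (fun j' => hp j' j ∧ active r O T exec σ j' t)

lemma mem_hpActive (hT : ∀ ℓ < r, 0 < T ℓ) :
    j' ∈ hpActive r O T exec σ j t ↔ hp j' j ∧ active r O T exec σ j' t := by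
  simp only [hpActive, Finset.mem_filter, Finset.mem_product, Finset.mem_range]
  refine ⟨fun h => h.2, fun h => ⟨⟨h.2.1, ?_⟩, h⟩⟩
  have harr : O j'.1 + j'.2 * T j'.1 ≤ t := h.2.2.1
  have := Nat.le_mul_of_pos_right j'.2 (hT _ h.2.1)
  omega

theorem isFSPSchedule.mem_iff (hT : ∀ ℓ < r, 0 < T ℓ) (hσ : isFSPSchedule r m O T exec σ) :
    j ∈ σ t ↔ active r O T exec σ j t ∧ (hpActive r O T exec σ j t).card < m := by
  constructor
  · intro hj
    refine ⟨hσ.active_of_mem hj, ?_⟩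
    have hsub : insert j (hpActive r O T exec σ j t) ⊆ σ t :=
      Finset.insert_subset hj fun j' hj' => by
        rw [mem_hpActive hT] at hj'
        exact hσ.mem_of_hp_of_mem hj hj'.2 hj'.1
    have hnot : j ∉ hpActive r O T exec σ j t := by
      rw [mem_hpActive hT]
      exact fun h => hp_irrefl j h.1
    have := Finset.card_le_card hsub
    rw [Finset.card_insert_of_notMem hnot] at this
    have := hσ.card_le t
    omega
  · rintro ⟨hact, hlt⟩
    by_contra hj
    obtain ⟨hfull, hhp⟩ := hσ.full_of_not_mem hact hj
    have := Finset.card_le_card (s := σ t) fun j' hj' =>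
      (mem_hpActive hT).2 ⟨hhp j' hj', hσ.active_of_mem hj'⟩
    omega

theorem isFSPSchedule.work_add_le_of_exec_le {e e' : Thread → ℕ} {σ' : ℕ → Finset Thread}
    (hσ : isFSPSchedule r m O T e σ) (hσ' : isFSPSchedule r m O T e' σ')
    (he : ∀ j, e' j ≤ e j) (t : ℕ) (j : Thread) :
    work σ j t + e' j ≤ work σ' j t + e j := by
  induction t generalizing j with
  | zero => simpa only [work_zero, zero_add] using he j
  | succ t ih =>
    have hactive : ∀ j', active r O T e' σ' j' t → active r O T e σ j' t :=
      fun j' ⟨h1, h2, h3⟩ => ⟨h1, h2, by have := ih j'; omega⟩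
    have hj := ih j
    rw [work_succ, work_succ]
    by_cases h : j ∈ σ t
    · have hjσ := hσ.active_of_mem h
      by_cases h' : j ∈ σ' t
      · simp only [h, h', if_true]
        omega
      have hdone : e' j ≤ work σ' j t := by
        by_contra! hlt
        obtain ⟨hfull, hhp⟩ := hσ'.full_of_not_mem ⟨hjσ.1, hjσ.2.1, hlt⟩ h'
        have hsub : insert j (σ' t) ⊆ σ t := Finset.insert_subset h fun j' hj' =>
          hσ.mem_of_hp_of_mem h (hactive j' (hσ'.active_of_mem hj')) (hhp j' hj')
        have := Finset.card_le_card hsub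
        rw [Finset.card_insert_of_notMem h'] at this
        have := hσ.card_le t
        omega
      simp only [h, h', if_true, if_false]
      have := hjσ.2.2
      omega
    · simp only [h, if_false]
      split <;> omega

theorem isFSPSchedule.work_eq_exec_of_work_eq_exec {e e' : Thread → ℕ}
    {σ' : ℕ → Finset Thread} (hσ : isFSPSchedule r m O T e σ)
    (hσ' : isFSPSchedule r m O T e' σ') (he : ∀ j, e' j ≤ e j)
    (h : work σ j t = e j) : work σ' j t = e' j := by
  have := hσ.work_add_le_of_exec_le hσ' he t j
  have := hσ'.work_le j t
  omega

end Schedule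

section Sstar

variable {O T : ℕ → ℕ}

lemma Sstar_eq_add_mul (O T : ℕ → ℕ) : ∀ ℓ, ∃ k, Sstar O T ℓ = O ℓ + k * T ℓ
  | 0 => ⟨0, by simp [Sstar]⟩
  | _ + 1 => ⟨_, rfl⟩

lemma le_Sstar (O T : ℕ → ℕ) (ℓ : ℕ) : O ℓ ≤ Sstar O T ℓ := by
  obtain ⟨k, hk⟩ := Sstar_eq_add_mul O T ℓ
  omega

lemma Sstar_le_Sstar_succ {ℓ : ℕ} (hT : 0 < T (ℓ + 1)) : Sstar O T ℓ ≤ Sstar O T (ℓ + 1) := by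
  have := Nat.lt_div_mul_add (a := Sstar O T ℓ - O (ℓ + 1) + T (ℓ + 1) - 1) hT
  show Sstar O T ℓ ≤ O (ℓ + 1) + _
  omega

lemma Sstar_mono {r i ℓ : ℕ} (hT : ∀ ℓ < r, 0 < T ℓ) (hiℓ : i ≤ ℓ) (hℓ : ℓ < r) :
    Sstar O T i ≤ Sstar O T ℓ := by
  induction ℓ, hiℓ using Nat.le_induction with
  | base => exact le_rfl
  | succ n _ ih => exact (ih (by omega)).trans (Sstar_le_Sstar_succ (hT _ hℓ))

lemma Sstar_le_Sstar_pred {r ℓ : ℕ} (hT : ∀ ℓ < r, 0 < T ℓ) (hℓ : ℓ < r) :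
    Sstar O T ℓ ≤ Sstar O T (r - 1) :=
  Sstar_mono hT (by omega) (by omega)

end Sstar

section Deadline

variable {O D T : ℕ → ℕ} {j : Thread}

lemma add_mul_add_le_of_lt {a k n T : ℕ} (h : a + k * T < a + n * T) :
    a + k * T + T ≤ a + n * T := by
  have := Nat.mul_le_mul_right T (Nat.lt_of_mul_lt_mul_right (a := T) (by omega) : k < n)
  rw [Nat.succ_mul] at this
  omega

lemma deadline_le_of_arrival_lt {n : ℕ} (hD : D j.1 ≤ T j.1)
    (h : arrival O T j < O j.1 + n * T j.1) : arrival O T j + D j.1 ≤ O j.1 + n * T j.1 := by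
  have := add_mul_add_le_of_lt (a := O j.1) (k := j.2) h
  unfold arrival
  omega

lemma deadline_le_Sstar (hD : D j.1 ≤ T j.1) (h : arrival O T j < Sstar O T j.1) :
    arrival O T j + D j.1 ≤ Sstar O T j.1 := by
  obtain ⟨k, hk⟩ := Sstar_eq_add_mul O T j.1
  rw [hk] at h ⊢
  exact deadline_le_of_arrival_lt hD h

lemma deadline_le_add_period {P : ℕ} (hD : D j.1 ≤ T j.1) (hTP : T j.1 ∣ P)
    (h : arrival O T j < O j.1 + P) : arrival O T j + D j.1 ≤ O j.1 + P := by
  rw [← Nat.div_mul_cancel hTP] at h ⊢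
  exact deadline_le_of_arrival_lt hD h

end Deadline

def shift (T : ℕ → ℕ) (P : ℕ) (j : Thread) : Thread := (j.1, j.2 + P / T j.1)

section Shift

variable {O T : ℕ → ℕ} {P : ℕ} {j j' : Thread}

lemma arrival_shift (h : T j.1 ∣ P) : arrival O T (shift T P j) = arrival O T j + P := by
  simp only [arrival, shift, add_mul, Nat.div_mul_cancel h]
  omega

lemma deadline_shift (D : ℕ → ℕ) (h : T j.1 ∣ P) :
    arrival O T (shift T P j) + D (shift T P j).1 = arrival O T j + D j.1 + P := by
  rw [arrival_shift h]
  exact Nat.add_right_comm _ _ _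

lemma shift_injective : Function.Injective (shift T P) := by
  rintro ⟨a, b⟩ ⟨c, d⟩ h
  simp only [shift, Prod.mk.injEq] at h
  obtain ⟨rfl, h⟩ := h
  simp only [Prod.mk.injEq, true_and]
  omega

lemma hp_shift_iff : hp (shift T P j') (shift T P j) ↔ hp j' j := by
  obtain ⟨a, b⟩ := j'
  obtain ⟨c, d⟩ := j
  simp only [hp, shift]
  by_cases h : a = c
  · subst h
    simp
  · simp [h]

lemma exists_shift_eq (harr : O j.1 + P ≤ arrival O T j) :
    ∃ j₀, shift T P j₀ = j := by
  have hle : P / T j.1 ≤ j.2 := by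
    unfold arrival at harr
    exact Nat.div_le_of_le_mul (by rw [mul_comm]; omega)
  exact ⟨(j.1, j.2 - P / T j.1), Prod.ext rfl (Nat.sub_add_cancel hle)⟩

end Shift

def DeadlinesMetUpTo (r : ℕ) (O C D T : ℕ → ℕ) (σ : ℕ → Finset Thread) (H : ℕ) : Prop :=
  ∀ j : Thread, j.1 < r → arrival O T j + D j.1 ≤ H → work σ j (arrival O T j + D j.1) = C j.1

def PeriodicBefore (r : ℕ) (O T : ℕ → ℕ) (P : ℕ) (σ : ℕ → Finset Thread) (t : ℕ) : Prop :=
  ∀ u < t, ∀ j : Thread, j.1 < r → Sstar O T j.1 ≤ u → (j ∈ σ u ↔ shift T P j ∈ σ (u + P))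

section Periodicity

variable {r m : ℕ} {O C D T : ℕ → ℕ} {P : ℕ} {σ : ℕ → Finset Thread} {j : Thread} {t H : ℕ}

lemma DeadlinesMetUpTo.not_active (hok : DeadlinesMetUpTo r O C D T σ H) (hj : j.1 < r)
    (hH : arrival O T j + D j.1 ≤ H) (ht : arrival O T j + D j.1 ≤ t) :
    ¬ active r O T (fun j => C j.1) σ j t :=
  not_active_of_le_work (hok j hj hH).ge ht

lemma work_shift_eq {exec : Thread → ℕ} (hσ : isFSPSchedule r m O T exec σ)
    (hper : PeriodicBefore r O T P σ t) (hTP : T j.1 ∣ P) (hj : j.1 < r)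
    (hrel : Sstar O T j.1 ≤ arrival O T j) :
    work σ (shift T P j) (t + P) = work σ j t := by
  have ha := arrival_shift (O := O) hTP
  rw [add_comm, work_add, hσ.work_eq_zero (by omega), zero_add]
  refine work_congr fun u hu => ?_
  by_cases hu' : arrival O T j ≤ u
  · rw [add_comm]
    exact (hper u hu j hj (hrel.trans hu')).symm
  · have hshift : shift T P j ∉ σ (P + u) := fun h => by
      have := hσ.arrival_le_of_mem h
      omega
    exact iff_of_false hshift (fun h => hu' (hσ.arrival_le_of_mem h))

lemma active_shift_iff (hT : ∀ ℓ < r, 0 < T ℓ) (hD : ∀ ℓ < r, D ℓ ≤ T ℓ)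
    (hTP : ∀ ℓ < r, T ℓ ∣ P) (hσ : isFSPSchedule r m O T (fun j => C j.1) σ)
    (hok : DeadlinesMetUpTo r O C D T σ (Sstar O T (r - 1) + P))
    (hper : PeriodicBefore r O T P σ t) (hj : j.1 < r) (ht : Sstar O T j.1 ≤ t) :
    active r O T (fun j => C j.1) σ (shift T P j) (t + P) ↔
      active r O T (fun j => C j.1) σ j t := by
  have ha := arrival_shift (O := O) (hTP _ hj)
  by_cases hrel : Sstar O T j.1 ≤ arrival O T j
  · unfold active
    rw [ha, work_shift_eq hσ hper (hTP _ hj) hj hrel]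
    exact and_congr Iff.rfl (and_congr (by omega) Iff.rfl)
  · have hdl := deadline_le_Sstar (hD _ hj) (not_le.1 hrel)
    have hSr := Sstar_le_Sstar_pred (O := O) hT hj
    have hdl' := deadline_shift (O := O) D (hTP _ hj)
    exact iff_of_false (hok.not_active (j := shift T P j) hj (by omega) (by omega))
      (hok.not_active hj (by omega) (by omega))

lemma hpActive_shift (hT : ∀ ℓ < r, 0 < T ℓ) (hD : ∀ ℓ < r, D ℓ ≤ T ℓ)
    (hTP : ∀ ℓ < r, T ℓ ∣ P) (hσ : isFSPSchedule r m O T (fun j => C j.1) σ)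
    (hok : DeadlinesMetUpTo r O C D T σ (Sstar O T (r - 1) + P))
    (hper : PeriodicBefore r O T P σ t) (hj : j.1 < r) (ht : Sstar O T j.1 ≤ t) :
    hpActive r O T (fun j => C j.1) σ (shift T P j) (t + P) =
      (hpActive r O T (fun j => C j.1) σ j t).image (shift T P) := by
  ext j'
  simp only [Finset.mem_image, mem_hpActive hT]
  constructor
  · rintro ⟨hhp, hact⟩
    have hle : j'.1 ≤ j.1 := hp_fst_le (j := shift T P j) hhp
    have hj' : j'.1 < r := by omega
    have hSt : Sstar O T j'.1 ≤ t := (Sstar_mono hT hle hj).trans ht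
    -- a thread released before `O + P` has its deadline inside the checked window
    have harr : O j'.1 + P ≤ arrival O T j' := by
      by_contra! h
      have hdl := deadline_le_add_period (hD _ hj') (hTP _ hj') h
      have := le_Sstar O T j'.1
      have := Sstar_le_Sstar_pred (O := O) hT hj'
      exact hok.not_active hj' (by omega) (by omega) hact
    obtain ⟨j₀, rfl⟩ := exists_shift_eq harr
    have hact₀ := (active_shift_iff (j := j₀) hT hD hTP hσ hok hper hj' hSt).1 hact
    exact ⟨j₀, ⟨hp_shift_iff.1 hhp, hact₀⟩, rfl⟩
  · rintro ⟨j₀, ⟨hhp, hact⟩, rfl⟩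
    have hle := hp_fst_le hhp
    exact ⟨hp_shift_iff.2 hhp, (active_shift_iff hT hD hTP hσ hok hper (by omega)
      ((Sstar_mono hT hle hj).trans ht)).2 hact⟩

theorem periodicBefore (hT : ∀ ℓ < r, 0 < T ℓ) (hD : ∀ ℓ < r, D ℓ ≤ T ℓ)
    (hTP : ∀ ℓ < r, T ℓ ∣ P) (hσ : isFSPSchedule r m O T (fun j => C j.1) σ)
    (hok : DeadlinesMetUpTo r O C D T σ (Sstar O T (r - 1) + P)) :
    ∀ t, PeriodicBefore r O T P σ t
  | 0 => fun _ hu => absurd hu (Nat.not_lt_zero _)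
  | t + 1 => fun u hu j hj ht => by
    have hper := periodicBefore hT hD hTP hσ hok t
    rcases Nat.lt_succ_iff_lt_or_eq.1 hu with hu | rfl
    · exact hper u hu j hj ht
    rw [hσ.mem_iff hT, hσ.mem_iff hT, active_shift_iff hT hD hTP hσ hok hper hj ht,
      hpActive_shift hT hD hTP hσ hok hper hj ht,
      Finset.card_image_of_injective _ shift_injective]

theorem deadlines_met (hT : ∀ ℓ < r, 0 < T ℓ) (hD : ∀ ℓ < r, D ℓ ≤ T ℓ)
    (hTP : ∀ ℓ < r, T ℓ ∣ P) (hP : 0 < P) (hσ : isFSPSchedule r m O T (fun j => C j.1) σ)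
    (hok : DeadlinesMetUpTo r O C D T σ (Sstar O T (r - 1) + P)) (j : Thread) (hj : j.1 < r) :
    work σ j (arrival O T j + D j.1) = C j.1 := by
  induction j using (measure (arrival O T)).wf.induction with
  | _ j ih =>
  by_cases hwin : arrival O T j + D j.1 ≤ Sstar O T (r - 1) + P
  · exact hok j hj hwin
  have hSr := Sstar_le_Sstar_pred (O := O) hT hj
  have hOP : O j.1 + P ≤ arrival O T j := by
    by_contra! h
    have := deadline_le_add_period (hD _ hj) (hTP _ hj) h
    have := le_Sstar O T j.1
    omega
  obtain ⟨j₀, rfl⟩ := exists_shift_eq hOP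
  have hj₀ : j₀.1 < r := hj
  have ha := arrival_shift (O := O) (hTP _ hj₀)
  have hdl := deadline_shift (O := O) D (hTP _ hj₀)
  have hrel : Sstar O T j₀.1 ≤ arrival O T j₀ := by
    by_contra! h
    have := deadline_le_Sstar (hD _ hj₀) h
    have := Sstar_le_Sstar_pred (O := O) hT hj₀
    omega
  rw [hdl, work_shift_eq hσ (periodicBefore hT hD hTP hσ hok _) (hTP _ hj₀) hj₀ hrel]
  exact ih j₀ (show arrival O T j₀ < arrival O T (shift T P j₀) by omega) hj₀

end Periodicity

theorem exact_FSP_schedulability_test_general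
    (r m : ℕ) (O C D T : ℕ → ℕ)
    (hT : ∀ ℓ < r, 0 < T ℓ) (hD : ∀ ℓ < r, D ℓ ≤ T ℓ)
    (P : ℕ) (hP : P = (Finset.range r).lcm T)
    -- the worst-case schedule
    (σ : ℕ → Finset Thread)
    (hσ : isFSPSchedule r m O T (fun j => C j.1) σ)
    -- no deadline missed in the feasibility interval `[0, S*_r + P)`
    (hok : ∀ j : Thread, j.1 < r → arrival O T j + D j.1 ≤ Sstar O T (r - 1) + P →
      work σ j (arrival O T j + D j.1) = C j.1) :
    -- then no deadline is ever missed, for any actual execution times `≤ C`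
    ∀ (c : Thread → ℕ), (∀ j : Thread, c j ≤ C j.1) →
      ∀ (σ' : ℕ → Finset Thread), isFSPSchedule r m O T c σ' →
        ∀ j : Thread, j.1 < r → work σ' j (arrival O T j + D j.1) = c j := by
  intro c hc σ' hσ' j hj
  have hTP : ∀ ℓ < r, T ℓ ∣ P := fun ℓ hℓ => hP ▸ Finset.dvd_lcm (Finset.mem_range.2 hℓ)
  have hPpos : 0 < P := Nat.pos_of_ne_zero fun h0 => by
    obtain ⟨ℓ, hℓ, hTℓ⟩ := Finset.lcm_eq_zero_iff.1 (hP ▸ h0)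
    exact (hT ℓ (Finset.mem_range.1 hℓ)).ne' hTℓ
  exact hσ.work_eq_exec_of_work_eq_exec hσ' hc (deadlines_met hT hD hTP hPpos hσ hok j hj)

/-- **Exact FSP schedulability test.**  For any asynchronous constrained-deadline
multi-thread system with `r` subprograms `q^1 > ⋯ > q^r` on `m` unit-capacity
processors, `[0, S*_r + P)` is a feasibility interval: if the FSP schedule with
worst-case execution times `C` misses no thread deadline in `[0, S*_r + P)`,
then for any actual execution times never exceeding the worst case, no deadline
is ever missed. -/
theorem exact_FSP_schedulability_test
    (r m : ℕ) (hr : 0 < r) (O C D T : ℕ → ℕ)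
    (hT : ∀ ℓ < r, 0 < T ℓ) (hD : ∀ ℓ < r, D ℓ ≤ T ℓ)
    (P : ℕ) (hP : P = (Finset.range r).lcm T)
    -- the worst-case schedule
    (σ : ℕ → Finset Thread)
    (hσ : isFSPSchedule r m O T (fun j => C j.1) σ)
    -- no deadline missed in the feasibility interval `[0, S*_r + P)`
    (hok : ∀ j : Thread, j.1 < r → arrival O T j + D j.1 ≤ Sstar O T (r - 1) + P →
      work σ j (arrival O T j + D j.1) = C j.1) :
    -- then no deadline is ever missed, for any actual execution times `≤ C`
    ∀ (c : Thread → ℕ), (∀ j : Thread, c j ≤ C j.1) →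
      ∀ (σ' : ℕ → Finset Thread), isFSPSchedule r m O T c σ' →
        ∀ j : Thread, j.1 < r → work σ' j (arrival O T j + D j.1) = c j :=
  exact_FSP_schedulability_test_general r m O C D T hT hD P hP σ hσ hok

end FSPTest
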